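/- For x, s ∈ [0,1], the series ∑_{k=1}^∞ (2 sin(kπx) sin(kπs))/(π²k²) converges to min(x,s)(1 - max(x,s)), i.e., the Green's function of the 1D Poisson problem equals the sum of its spectral decomposition. -/

import Mathlib

open Real Set

/-!
By the product-to-sum formula the `k`-th term is `(cos (kπ(x - s)) - cos (kπ(x + s))) / (π²k²)`.
The Fourier series of the Bernoulli polynomial `B₂(t) = t² - t + 1/6` on `[0, 1]`, evaluated at
`t = |u|/2`, gives `∑ cos (kπu) / k² = π² (u²/4 - |u|/2 + 1/6)` for `|u| ≤ 2`. Subtracting the two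
instances `u = x - s` and `u = x + s`, the quadratic parts leave `-xs` and the `|u|/2` parts leave
`min x s`, and `min x s - xs = min x s (1 - max x s)`.
-/

lemma hasSum_cos_nat_mul_pi_div_sq {u : ℝ} (hu : u ∈ Icc (0:ℝ) 2) :
    HasSum (fun n : ℕ => cos (n * π * u) / (n : ℝ) ^ 2) (π ^ 2 * (u ^ 2 / 4 - u / 2 + 1 / 6)) := by
  have ht : u / 2 ∈ Icc (0:ℝ) 1 := ⟨by linarith [hu.1], by linarith [hu.2]⟩
  have h := hasSum_one_div_nat_pow_mul_cos one_ne_zero ht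
  rw [← bernoulliFun.eq_1, mul_one, bernoulliFun_two] at h
  convert h using 1
  · ext n
    ring_nf
  · norm_num [Nat.factorial]
    ring

lemma hasSum_cos_nat_mul_pi_div_sq_of_abs_le {u : ℝ} (hu : |u| ≤ 2) :
    HasSum (fun n : ℕ => cos (n * π * u) / (n : ℝ) ^ 2)
      (π ^ 2 * (u ^ 2 / 4 - |u| / 2 + 1 / 6)) := by
  have h := hasSum_cos_nat_mul_pi_div_sq ⟨abs_nonneg u, hu⟩
  rw [sq_abs] at h
  convert h using 3 with n
  rw [← cos_abs, abs_mul, abs_of_nonneg (by positivity : (0:ℝ) ≤ n * π)]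

lemma min_mul_one_sub_max_eq (x s : ℝ) :
    min x s * (1 - max x s)
      = ((x - s) ^ 2 / 4 - |x - s| / 2) - ((x + s) ^ 2 / 4 - (x + s) / 2) := by
  rcases le_total x s with h | h
  · rw [min_eq_left h, max_eq_right h, abs_of_nonpos (by linarith)]
    ring
  · rw [min_eq_right h, max_eq_left h, abs_of_nonneg (by linarith)]
    ring

theorem green_poisson_spectral_decomposition
    (x s : ℝ) (hx : x ∈ Icc (0:ℝ) 1) (hs : s ∈ Icc (0:ℝ) 1) :
    HasSum (fun k : ℕ+ => (2 * Real.sin (k * π * x) * Real.sin (k * π * s)) / (π ^ 2 * (k:ℝ) ^ 2))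
      (min x s * (1 - max x s)) := by
  obtain ⟨hx0, hx1⟩ := hx
  obtain ⟨hs0, hs1⟩ := hs
  have hdiff : |x - s| ≤ 2 := abs_le.mpr ⟨by linarith, by linarith⟩
  have hadd : |x + s| ≤ 2 := abs_le.mpr ⟨by linarith, by linarith⟩
  have hsum := ((hasSum_cos_nat_mul_pi_div_sq_of_abs_le hdiff).sub
    (hasSum_cos_nat_mul_pi_div_sq_of_abs_le hadd)).div_const (π ^ 2)
  rw [abs_of_nonneg (by linarith : 0 ≤ x + s)] at hsum
  refine (hasSum_pnat_iff (f := fun n : ℕ =>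
    2 * sin (n * π * x) * sin (n * π * s) / (π ^ 2 * (n : ℝ) ^ 2))).mpr ?_
  simp only [Nat.cast_zero, zero_mul, sin_zero, mul_zero, zero_div, add_zero]
  rw [← mul_sub, mul_div_cancel_left₀ _ (pow_ne_zero 2 pi_ne_zero), add_sub_add_right_eq_sub,
    ← min_mul_one_sub_max_eq] at hsum
  refine hsum.congr_fun fun k => ?_
  rw [two_mul_sin_mul_sin, mul_sub, mul_add, ← sub_div, div_div, mul_comm ((k : ℝ) ^ 2)]
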